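/- In Algorithm 3, the stage-k updated levels are nondecreasing in k: assuming |R_{ij(k)}| is nondecreasing in k for every family F_{ij}, the sequences α_{1j(k)} and α_{2l(k)} are nondecreasing in k, and each is bounded above: α_{1j(k)} ≤ α_{1j} + ∑_l g_{2l1j} α_{2l} and α_{2l(k)} ≤ α_{2l} + ∑_j g_{1j2l} (α_{1j} + ∑_{l'} g_{2l'1j} α_{2l'}). -/

import Mathlib

/-!
Every level has the form `a + ∑ i, c i * g i * x i` with nonnegative transition coefficients `g`
and nonnegative inputs `x`, where the rejection ratios `c = |R| / n` lie in `[0, 1]` and grow with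
the stage. Such an expression is monotone in `c` and in `x`, so passing to the next stage can only
increase it, and replacing every ratio by `1` bounds it. The layer-2 level at stage `k` is fed by
the layer-1 level at the same stage, so its bound uses the bound already obtained for layer 1.
-/

open Finset

section WeightedSum

variable {ι : Type*} [Fintype ι] (a : ℝ) {c c' g x x' : ι → ℝ}

theorem le_add_sum_mul_mul (hc : ∀ i, 0 ≤ c i) (hg : ∀ i, 0 ≤ g i) (hx : ∀ i, 0 ≤ x i) :
    a ≤ a + ∑ i, c i * g i * x i :=
  le_add_of_nonneg_right <| sum_nonneg fun i _ => mul_nonneg (mul_nonneg (hc i) (hg i)) (hx i)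

theorem add_sum_mul_mul_le_add_sum_mul_mul (hc : ∀ i, 0 ≤ c i) (hcc' : ∀ i, c i ≤ c' i)
    (hg : ∀ i, 0 ≤ g i) (hx : ∀ i, 0 ≤ x i) (hxx' : ∀ i, x i ≤ x' i) :
    a + ∑ i, c i * g i * x i ≤ a + ∑ i, c' i * g i * x' i := by
  refine add_le_add_right (sum_le_sum fun i _ => ?_) a
  exact mul_le_mul (mul_le_mul_of_nonneg_right (hcc' i) (hg i)) (hxx' i) (hx i)
    (mul_nonneg ((hc i).trans (hcc' i)) (hg i))

theorem add_sum_mul_mul_le_add_sum_mul (hc : ∀ i, 0 ≤ c i) (hc_le_one : ∀ i, c i ≤ 1)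
    (hg : ∀ i, 0 ≤ g i) (hx : ∀ i, 0 ≤ x i) (hxx' : ∀ i, x i ≤ x' i) :
    a + ∑ i, c i * g i * x i ≤ a + ∑ i, g i * x' i := by
  simpa only [one_mul] using
    add_sum_mul_mul_le_add_sum_mul_mul a (c' := fun _ => 1) hc hc_le_one hg hx hxx'

end WeightedSum

theorem natCast_div_le_one_of_le {r n : ℕ} (h : r ≤ n) : (r : ℝ) / n ≤ 1 :=
  div_le_one_of_le₀ (by exact_mod_cast h) n.cast_nonneg

theorem natCast_div_le_natCast_div {r r' n : ℕ} (h : r ≤ r') : (r : ℝ) / n ≤ r' / n :=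
  div_le_div_of_nonneg_right (by exact_mod_cast h) n.cast_nonneg

section LaggedRatio

variable {R : ℕ → ℕ} {n : ℕ}

/-- The coefficient with which layer 2 feeds back into layer 1 at stage `k`: the rejection ratio
of stage `k - 1`, and `0` at stage `1`, where there is no feedback yet. -/
noncomputable def laggedRatio (R : ℕ → ℕ) (n k : ℕ) : ℝ :=
  if k ≤ 1 then 0 else (R (k - 1) : ℝ) / n

theorem laggedRatio_nonneg (k : ℕ) : 0 ≤ laggedRatio R n k := by
  unfold laggedRatio
  split_ifs <;> positivity

theorem laggedRatio_le_one (hR : ∀ k, R k ≤ n) (k : ℕ) : laggedRatio R n k ≤ 1 := by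
  unfold laggedRatio
  split_ifs
  · exact zero_le_one
  · exact natCast_div_le_one_of_le (hR _)

theorem laggedRatio_le_succ (hR : ∀ k, R k ≤ R (k + 1)) (k : ℕ) :
    laggedRatio R n k ≤ laggedRatio R n (k + 1) := by
  unfold laggedRatio
  split_ifs with hk hk'
  · exact le_rfl
  · positivity
  · omega
  · obtain ⟨k, rfl⟩ : ∃ k', k = k' + 1 := ⟨k - 1, by omega⟩
    exact natCast_div_le_natCast_div (hR k)

end LaggedRatio

theorem two_layer_levels_monotone_bounded_general
    (m1 m2 : ℕ)
    (n1 : Fin m1 → ℕ) (n2 : Fin m2 → ℕ)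
    (a1 : Fin m1 → ℝ) (a2 : Fin m2 → ℝ)
    (ha1 : ∀ j, 0 ≤ a1 j) (ha2 : ∀ l, 0 ≤ a2 l)
    (g12 : Fin m1 → Fin m2 → ℝ) (g21 : Fin m2 → Fin m1 → ℝ)
    (hg12 : ∀ j l, 0 ≤ g12 j l ∧ g12 j l ≤ 1)
    (hg21 : ∀ l j, 0 ≤ g21 l j ∧ g21 l j ≤ 1)
    (R1 : Fin m1 → ℕ → ℕ) (R2 : Fin m2 → ℕ → ℕ)
    (hR1mono : ∀ j k, R1 j k ≤ R1 j (k + 1)) (hR1 : ∀ j k, R1 j k ≤ n1 j)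
    (hR2mono : ∀ l k, R2 l k ≤ R2 l (k + 1)) (hR2 : ∀ l k, R2 l k ≤ n2 l)
    (A1 : Fin m1 → ℕ → ℝ) (A2 : Fin m2 → ℕ → ℝ)
    (hA1one : ∀ j, A1 j 1 = a1 j)
    (hA1 : ∀ k, 2 ≤ k → ∀ j, A1 j k = a1 j
      + ∑ l, ((R2 l (k - 1) : ℝ) / n2 l) * g21 l j * a2 l)
    (hA2 : ∀ k, 1 ≤ k → ∀ l, A2 l k = a2 l
      + ∑ j, ((R1 j k : ℝ) / n1 j) * g12 j l * A1 j k) :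
    ∀ k, 1 ≤ k →
      (∀ j, A1 j k ≤ A1 j (k + 1)) ∧ (∀ l, A2 l k ≤ A2 l (k + 1))
      ∧ (∀ j, A1 j k ≤ a1 j + ∑ l, g21 l j * a2 l)
      ∧ (∀ l, A2 l k ≤ a2 l
          + ∑ j, g12 j l * (a1 j + ∑ l', g21 l' j * a2 l')) := by
  have hA1_eq : ∀ k, 1 ≤ k → ∀ j,
      A1 j k = a1 j + ∑ l, laggedRatio (R2 l) (n2 l) k * g21 l j * a2 l := by
    intro k hk j
    rcases hk.eq_or_lt with rfl | hk2
    · simp [laggedRatio, hA1one]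
    · simp [laggedRatio, hA1 k hk2, Nat.not_le.mpr hk2]
  have hA1_nonneg : ∀ k, 1 ≤ k → ∀ j, 0 ≤ A1 j k := fun k hk j =>
    (ha1 j).trans <| hA1_eq k hk j ▸
      le_add_sum_mul_mul _ (fun l => laggedRatio_nonneg k) (fun l => (hg21 l j).1) ha2
  have hA1_bound : ∀ k, 1 ≤ k → ∀ j, A1 j k ≤ a1 j + ∑ l, g21 l j * a2 l := fun k hk j =>
    hA1_eq k hk j ▸ add_sum_mul_mul_le_add_sum_mul _ (fun l => laggedRatio_nonneg k)
      (fun l => laggedRatio_le_one (hR2 l) k) (fun l => (hg21 l j).1) ha2 fun _ => le_rfl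
  intro k hk
  have hA1_mono : ∀ j, A1 j k ≤ A1 j (k + 1) := fun j => by
    rw [hA1_eq k hk, hA1_eq (k + 1) (by omega)]
    exact add_sum_mul_mul_le_add_sum_mul_mul _ (fun l => laggedRatio_nonneg k)
      (fun l => laggedRatio_le_succ (hR2mono l) k) (fun l => (hg21 l j).1) ha2 fun _ => le_rfl
  refine ⟨hA1_mono, fun l => ?_, hA1_bound k hk, fun l => ?_⟩
  · rw [hA2 k hk, hA2 (k + 1) (by omega)]
    exact add_sum_mul_mul_le_add_sum_mul_mul _ (fun j => by positivity)
      (fun j => natCast_div_le_natCast_div (hR1mono j k)) (fun j => (hg12 j l).1)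
      (hA1_nonneg k hk) hA1_mono
  · rw [hA2 k hk]
    exact add_sum_mul_mul_le_add_sum_mul _ (fun j => by positivity)
      (fun j => natCast_div_le_one_of_le (hR1 j k)) (fun j => (hg12 j l).1)
      (hA1_nonneg k hk) (hA1_bound k hk)

/-- In Algorithm 3, assuming rejection counts are nondecreasing in the stage
index, the updated local levels are nondecreasing in the stage index and
bounded above by their worst-case values. -/
theorem two_layer_levels_monotone_bounded
    (m1 m2 : ℕ) (hm1 : 0 < m1) (hm2 : 0 < m2)
    (n1 : Fin m1 → ℕ) (n2 : Fin m2 → ℕ)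
    (hn1 : ∀ j, 0 < n1 j) (hn2 : ∀ l, 0 < n2 l)
    (a1 : Fin m1 → ℝ) (a2 : Fin m2 → ℝ)
    (ha1 : ∀ j, 0 ≤ a1 j) (ha2 : ∀ l, 0 ≤ a2 l)
    (g12 : Fin m1 → Fin m2 → ℝ) (g21 : Fin m2 → Fin m1 → ℝ)
    (hg12 : ∀ j l, 0 ≤ g12 j l ∧ g12 j l ≤ 1)
    (hg21 : ∀ l j, 0 ≤ g21 l j ∧ g21 l j ≤ 1)
    (R1 : Fin m1 → ℕ → ℕ) (R2 : Fin m2 → ℕ → ℕ)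
    (hR1mono : ∀ j k, R1 j k ≤ R1 j (k + 1)) (hR1 : ∀ j k, R1 j k ≤ n1 j)
    (hR2mono : ∀ l k, R2 l k ≤ R2 l (k + 1)) (hR2 : ∀ l k, R2 l k ≤ n2 l)
    (A1 : Fin m1 → ℕ → ℝ) (A2 : Fin m2 → ℕ → ℝ)
    (hA1one : ∀ j, A1 j 1 = a1 j)
    (hA1 : ∀ k, 2 ≤ k → ∀ j, A1 j k = a1 j
      + ∑ l, ((R2 l (k - 1) : ℝ) / n2 l) * g21 l j * a2 l)
    (hA2 : ∀ k, 1 ≤ k → ∀ l, A2 l k = a2 l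
      + ∑ j, ((R1 j k : ℝ) / n1 j) * g12 j l * A1 j k) :
    ∀ k, 1 ≤ k →
      (∀ j, A1 j k ≤ A1 j (k + 1)) ∧ (∀ l, A2 l k ≤ A2 l (k + 1))
      ∧ (∀ j, A1 j k ≤ a1 j + ∑ l, g21 l j * a2 l)
      ∧ (∀ l, A2 l k ≤ a2 l
          + ∑ j, g12 j l * (a1 j + ∑ l', g21 l' j * a2 l')) :=
  two_layer_levels_monotone_bounded_general m1 m2 n1 n2 a1 a2 ha1 ha2 g12 g21 hg12 hg21 R1 R2
    hR1mono hR1 hR2mono hR2 A1 A2 hA1one hA1 hA2
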